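/- arXiv:1806.00299 — 2 statements merged into one kernel-verified Lean document; each statement's English description precedes it below -/
import Mathlib

section
/- Consider a sequence of k draws without replacement from a population of n bits of which i are zero-bits (i ≤ n/2), where one tracks the running count of zero-bits flipped minus one-bits flipped. Conditional on the running balance having returned to 0 (all i original zero-bits advantage spent), the probability that the count of zero-bit positions among the remaining draws ever exceeds the count of one-bit positions by at least 1 is at most 2i/n. -/
open Finset
open scoped Classical

namespace Stmt8

variable {N : ℕ}

noncomputable def cnt (w : Fin N → Bool) (c : Bool) (t : ℕ) : ℕ :=
  (univ.filter (fun j : Fin N => (j : ℕ) < t ∧ w j = c)).card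

def Bad (w : Fin N → Bool) : Prop :=
  ∃ t, t ≤ N ∧ cnt w false t + 1 ≤ cnt w true t

lemma cnt_zero (w : Fin N → Bool) (c : Bool) : cnt w c 0 = 0 := by
  simp [cnt]

lemma cnt_succ (w : Fin N → Bool) (c : Bool) (t : ℕ) (ht : t < N) :
    cnt w c (t + 1) = cnt w c t + (if w ⟨t, ht⟩ = c then 1 else 0) := by
  unfold cnt
  split_ifs with h
  · have he : (univ.filter (fun j : Fin N => (j : ℕ) < t + 1 ∧ w j = c))
        = insert ⟨t, ht⟩ (univ.filter (fun j : Fin N => (j : ℕ) < t ∧ w j = c)) := by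
      ext j
      simp only [mem_filter, mem_insert, mem_univ, true_and]
      constructor
      · rintro ⟨hj, hc⟩
        rcases Nat.lt_succ_iff_lt_or_eq.mp hj with h' | h'
        · exact Or.inr ⟨h', hc⟩
        · exact Or.inl (Fin.ext h')
      · rintro (rfl | ⟨hj, hc⟩)
        · exact ⟨Nat.lt_succ_self t, h⟩
        · exact ⟨Nat.lt_succ_of_lt hj, hc⟩
    rw [he, Finset.card_insert_of_notMem (by simp)]
  · have he : (univ.filter (fun j : Fin N => (j : ℕ) < t + 1 ∧ w j = c))
        = (univ.filter (fun j : Fin N => (j : ℕ) < t ∧ w j = c)) := by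
      apply Finset.filter_congr
      intro j _
      show _ ↔ _
      constructor
      · rintro ⟨hj, hc⟩
        rcases Nat.lt_succ_iff_lt_or_eq.mp hj with h' | h'
        · exact ⟨h', hc⟩
        · exact absurd (by rw [← hc]; congr 1; exact Fin.ext h') (Ne.symm h)
      · rintro ⟨hj, hc⟩
        exact ⟨Nat.lt_succ_of_lt hj, hc⟩
    rw [he, Nat.add_zero]

lemma cnt_congr {w₁ w₂ : Fin N → Bool} (c : Bool) (t : ℕ)
    (h : ∀ j : Fin N, (j : ℕ) < t → w₁ j = w₂ j) : cnt w₁ c t = cnt w₂ c t := by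
  unfold cnt
  congr 1
  apply Finset.filter_congr
  intro j _
  constructor
  · rintro ⟨hj, hc⟩; exact ⟨hj, (h j hj) ▸ hc⟩
  · rintro ⟨hj, hc⟩; exact ⟨hj, (h j hj) ▸ hc⟩

lemma cnt_le_cnt_N (w : Fin N → Bool) (c : Bool) (t : ℕ) : cnt w c t ≤ cnt w c N := by
  apply Finset.card_le_card
  intro j hj
  simp only [mem_filter, mem_univ, true_and] at *
  exact ⟨j.isLt, hj.2⟩

lemma cnt_N (w : Fin N → Bool) (c : Bool) :
    cnt w c N = (univ.filter (fun j : Fin N => w j = c)).card := by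
  unfold cnt
  congr 1
  apply Finset.filter_congr
  intro j _
  simp [j.isLt]

lemma cnt_add (w : Fin N → Bool) :
    cnt w true N + cnt w false N = N := by
  rw [cnt_N, cnt_N]
  have : (univ.filter (fun j : Fin N => w j = false)) =
      (univ.filter (fun j : Fin N => ¬ (w j = true))) := by
    apply Finset.filter_congr; intro j _; simp
  rw [this, Finset.card_filter_add_card_filter_not]
  simp

lemma cnt_split (w : Fin N → Bool) (c : Bool) (t : ℕ) :
    cnt w c N = cnt w c t + (univ.filter (fun j : Fin N => t ≤ (j : ℕ) ∧ w j = c)).card := by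
  rw [cnt_N]
  unfold cnt
  rw [← Finset.card_union_of_disjoint]
  · congr 1
    ext j
    simp only [mem_filter, mem_union, mem_univ, true_and]
    constructor
    · intro hc
      rcases lt_or_ge (j : ℕ) t with h' | h'
      · exact Or.inl ⟨h', hc⟩
      · exact Or.inr ⟨h', hc⟩
    · rintro (⟨_, hc⟩ | ⟨_, hc⟩) <;> exact hc
  · rw [Finset.disjoint_left]
    rintro j hj hj'
    simp only [mem_filter] at hj hj'
    omega

end Stmt8
namespace Stmt8

variable {N : ℕ}

noncomputable def ft (w : Fin N → Bool) (hw : Bad w) : ℕ := Nat.find hw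

lemma ft_le (w : Fin N → Bool) (hw : Bad w) : ft w hw ≤ N := (Nat.find_spec hw).1

lemma ft_spec (w : Fin N → Bool) (hw : Bad w) :
    cnt w false (ft w hw) + 1 ≤ cnt w true (ft w hw) := (Nat.find_spec hw).2

lemma ft_min (w : Fin N → Bool) (hw : Bad w) {t : ℕ} (ht : t < ft w hw) :
    ¬ (t ≤ N ∧ cnt w false t + 1 ≤ cnt w true t) := Nat.find_min hw ht

lemma ft_pos (w : Fin N → Bool) (hw : Bad w) : 0 < ft w hw := by
  rcases Nat.eq_zero_or_pos (ft w hw) with h | h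
  · have := ft_spec w hw
    rw [h, cnt_zero, cnt_zero] at this
    omega
  · exact h

lemma ft_eq (w : Fin N → Bool) (hw : Bad w) :
    cnt w true (ft w hw) = cnt w false (ft w hw) + 1 := by
  obtain ⟨t₁, h1⟩ : ∃ t₁, ft w hw = t₁ + 1 :=
    ⟨ft w hw - 1, by have := ft_pos w hw; omega⟩
  have ht₁N : t₁ < N := by have := ft_le w hw; omega
  have hmin := ft_min w hw (t := t₁) (by omega)
  have hmin' : cnt w true t₁ ≤ cnt w false t₁ := by
    by_contra hc
    exact hmin ⟨by omega, by omega⟩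
  have hT := cnt_succ w true t₁ ht₁N
  have hF := cnt_succ w false t₁ ht₁N
  have hspec := ft_spec w hw
  rw [h1] at hspec ⊢
  by_cases hb : w ⟨t₁, ht₁N⟩ = true
  · rw [if_pos hb] at hT
    rw [if_neg (by simp [hb])] at hF
    omega
  · rw [if_neg hb] at hT
    rw [if_pos (by simpa using hb)] at hF
    omega

noncomputable def rmap (w : Fin N → Bool) (hw : Bad w) : Fin N → Bool :=
  fun j => if (j : ℕ) < ft w hw then w j else !(w j)

lemma rmap_cnt (w : Fin N → Bool) (hw : Bad w) (c : Bool) {t : ℕ} (ht : t ≤ ft w hw) :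
    cnt (rmap w hw) c t = cnt w c t := by
  apply cnt_congr
  intro j hj
  simp [rmap, show (j : ℕ) < ft w hw by omega]

lemma bad_rmap (w : Fin N → Bool) (hw : Bad w) : Bad (rmap w hw) :=
  ⟨ft w hw, ft_le w hw, by
    rw [rmap_cnt w hw false le_rfl, rmap_cnt w hw true le_rfl]
    exact ft_spec w hw⟩

lemma ft_rmap (w : Fin N → Bool) (hw : Bad w) :
    ft (rmap w hw) (bad_rmap w hw) = ft w hw := by
  rw [ft]
  refine (Nat.find_eq_iff _).mpr ?_
  beta_reduce
  constructor
  · exact ⟨ft_le w hw, by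
      rw [rmap_cnt w hw false le_rfl, rmap_cnt w hw true le_rfl]
      exact ft_spec w hw⟩
  · intro m hm
    rw [rmap_cnt w hw false (le_of_lt hm), rmap_cnt w hw true (le_of_lt hm)]
    exact ft_min w hw hm

lemma rmap_inj {w₁ w₂ : Fin N → Bool} (h₁ : Bad w₁) (h₂ : Bad w₂)
    (h : rmap w₁ h₁ = rmap w₂ h₂) : w₁ = w₂ := by
  have hfind : ft w₁ h₁ = ft w₂ h₂ := by
    have e1 := ft_rmap w₁ h₁
    have e2 := ft_rmap w₂ h₂
    rw [← e1, ← e2]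
    unfold ft
    congr 1
    rw [h]
  funext j
  have hj1 := congrFun h j
  simp only [rmap, hfind] at hj1
  by_cases hj : (j : ℕ) < ft w₂ h₂
  · rwa [if_pos hj, if_pos hj] at hj1
  · rw [if_neg hj, if_neg hj] at hj1
    exact Bool.not_inj hj1

lemma rmap_trues (w : Fin N → Bool) (hw : Bad w) :
    cnt (rmap w hw) true N + cnt w true N = N + 1 := by
  set t := ft w hw with hft
  have htN := ft_le w hw
  have h1 : cnt (rmap w hw) true N = cnt (rmap w hw) true t +
      (univ.filter (fun j : Fin N => t ≤ (j : ℕ) ∧ rmap w hw j = true)).card :=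
    cnt_split _ _ _
  have h2 : cnt w false N = cnt w false t +
      (univ.filter (fun j : Fin N => t ≤ (j : ℕ) ∧ w j = false)).card :=
    cnt_split _ _ _
  have h3 : (univ.filter (fun j : Fin N => t ≤ (j : ℕ) ∧ rmap w hw j = true))
      = (univ.filter (fun j : Fin N => t ≤ (j : ℕ) ∧ w j = false)) := by
    apply Finset.filter_congr
    intro j _
    show _ ↔ _
    constructor
    · rintro ⟨hj, hc⟩
      refine ⟨hj, ?_⟩
      simp only [rmap, if_neg (by omega : ¬ ((j:ℕ) < ft w hw))] at hc
      simpa using hc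
    · rintro ⟨hj, hc⟩
      refine ⟨hj, ?_⟩
      simp [rmap, if_neg (by omega : ¬ ((j:ℕ) < ft w hw)), hc]
  have h4 := rmap_cnt w hw true (le_refl t)
  have h5 := ft_eq w hw
  rw [← hft] at h5
  have h6 := cnt_add w
  have h7 : cnt w false t ≤ cnt w false N := cnt_le_cnt_N w false t
  rw [h3] at h1
  omega

end Stmt8
namespace Stmt8

variable {N : ℕ}

lemma card_words (k : ℕ) :
    (univ.filter (fun w : Fin N → Bool => cnt w true N = k)).card = N.choose k := by
  rw [show N.choose k = (Finset.powersetCard k (univ : Finset (Fin N))).card from by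
    rw [Finset.card_powersetCard, Finset.card_univ, Fintype.card_fin]]
  apply Finset.card_bij' (fun w _ => univ.filter (fun j : Fin N => w j = true))
    (fun S _ => fun j : Fin N => decide (j ∈ S))
  · intro w hw
    simp only [mem_filter, mem_univ, true_and] at hw
    rw [Finset.mem_powersetCard]
    exact ⟨Finset.subset_univ _, by rw [← hw, cnt_N]⟩
  · intro S hS
    rw [Finset.mem_powersetCard] at hS
    simp only [mem_filter, mem_univ, true_and, cnt_N]
    rw [← hS.2]
    congr 1
    ext j
    simp
  · intro w hw
    funext j
    simp
  · intro S hS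
    ext j
    simp

def word (pop : Fin N → Bool) (σ : Equiv.Perm (Fin N)) : Fin N → Bool :=
  fun j => pop (σ j)

lemma cnt_word_N (pop : Fin N → Bool) (σ : Equiv.Perm (Fin N)) (c : Bool) :
    cnt (word pop σ) c N = (univ.filter (fun x : Fin N => pop x = c)).card := by
  rw [cnt_N]
  apply Finset.card_bij (fun j _ => σ j)
  · intro j hj
    simp only [mem_filter, mem_univ, true_and] at *
    exact hj
  · intro a _ b _ hab
    exact σ.injective hab
  · intro x hx
    refine ⟨σ.symm x, ?_, by simp⟩
    simp only [mem_filter, mem_univ, true_and] at *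
    simpa [word] using hx

lemma fiber_card (pop : Fin N → Bool) (σ₁ σ₂ : Equiv.Perm (Fin N)) :
    (univ.filter (fun σ => word pop σ = word pop σ₁)).card
      = (univ.filter (fun σ => word pop σ = word pop σ₂)).card := by
  apply Finset.card_bij' (fun σ _ => σ * σ₁⁻¹ * σ₂) (fun σ _ => σ * σ₂⁻¹ * σ₁)
  · intro σ hσ
    simp only [mem_filter, mem_univ, true_and] at *
    funext j
    have h1 := congrFun hσ (σ₁⁻¹ (σ₂ j))
    simp only [word, Equiv.Perm.mul_apply] at *
    simpa using h1
  · intro σ hσ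
    simp only [mem_filter, mem_univ, true_and] at *
    funext j
    have h1 := congrFun hσ (σ₂⁻¹ (σ₁ j))
    simp only [word, Equiv.Perm.mul_apply] at *
    simpa using h1
  · intro σ _
    group
  · intro σ _
    group

lemma fiber_nonempty (pop : Fin N → Bool) (w : Fin N → Bool)
    (h : (univ.filter (fun j : Fin N => w j = true)).card
        = (univ.filter (fun x : Fin N => pop x = true)).card) :
    ∃ σ : Equiv.Perm (Fin N), word pop σ = w := by
  have hcT : Fintype.card {j : Fin N // w j = true} = Fintype.card {x : Fin N // pop x = true} := by
    rw [Fintype.card_subtype, Fintype.card_subtype]; exact h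
  have hcF : Fintype.card {j : Fin N // ¬ (w j = true)}
      = Fintype.card {x : Fin N // ¬ (pop x = true)} := by
    rw [Fintype.card_subtype_compl, Fintype.card_subtype_compl, hcT]
  let e : {j : Fin N // w j = true} ≃ {x : Fin N // pop x = true} := Fintype.equivOfCardEq hcT
  let f : {j : Fin N // ¬ (w j = true)} ≃ {x : Fin N // ¬ (pop x = true)} :=
    Fintype.equivOfCardEq hcF
  refine ⟨Equiv.subtypeCongr e f, ?_⟩
  funext j
  by_cases hj : w j = true
  · have : Equiv.subtypeCongr e f j = (e ⟨j, hj⟩ : Fin N) := by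
      simp [Equiv.subtypeCongr, hj]
    rw [word, this, (e ⟨j, hj⟩).prop, hj]
  · have : Equiv.subtypeCongr e f j = (f ⟨j, hj⟩ : Fin N) := by
      simp [Equiv.subtypeCongr, hj]
    rw [word, this]
    have h1 := (f ⟨j, hj⟩).prop
    simp only [Bool.not_eq_true] at h1 hj
    rw [h1, hj]

end Stmt8
namespace Stmt8

variable {N : ℕ}

lemma main (pop : Fin N → Bool) (z : ℕ)
    (hz : z = (univ.filter (fun x : Fin N => pop x = true)).card) :
    (univ.filter (fun σ : Equiv.Perm (Fin N) => Bad (word pop σ))).card * (N - z + 1)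
      ≤ z * N.factorial := by
  have hword : ∀ σ : Equiv.Perm (Fin N), cnt (word pop σ) true N = z := by
    intro σ; rw [cnt_word_N, hz]
  rcases Nat.eq_zero_or_pos z with hz0 | hz1
  · have hempty : (univ.filter (fun σ : Equiv.Perm (Fin N) => Bad (word pop σ))) = ∅ := by
      rw [Finset.filter_eq_empty_iff]
      rintro σ - ⟨t, ht, hlt⟩
      have h1 : cnt (word pop σ) true t ≤ z := by
        rw [← hword σ]; exact cnt_le_cnt_N _ _ _
      omega
    rw [hempty]
    simp
  have hzN : z ≤ N := by
    rw [hz]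
    calc (univ.filter (fun x : Fin N => pop x = true)).card
        ≤ (univ : Finset (Fin N)).card := Finset.card_filter_le _ _
      _ = N := by simp
  set B := univ.filter (fun σ : Equiv.Perm (Fin N) => Bad (word pop σ)) with hB
  set D := B.image (word pop) with hD
  set F := (univ.filter (fun σ : Equiv.Perm (Fin N) => word pop σ = word pop 1)).card with hF
  have hDbad : ∀ w ∈ D, Bad w := by
    intro w hw
    obtain ⟨σ₁, hσ₁B, hσ₁w⟩ := Finset.mem_image.mp hw
    rw [hB, Finset.mem_filter] at hσ₁B
    exact hσ₁w ▸ hσ₁B.2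
  have hDz : ∀ w ∈ D, cnt w true N = z := by
    intro w hw
    obtain ⟨σ₁, _, hσ₁w⟩ := Finset.mem_image.mp hw
    rw [← hσ₁w]; exact hword σ₁
  -- B.card = D.card * F
  have hBcard : B.card = D.card * F := by
    have h1 : B.card = ∑ w ∈ D, (B.filter (fun σ => word pop σ = w)).card :=
      Finset.card_eq_sum_card_fiberwise (fun σ hσ => Finset.mem_image_of_mem _ hσ)
    rw [h1]
    rw [Finset.sum_congr rfl (fun w hw => ?_), Finset.sum_const, smul_eq_mul]
    obtain ⟨σ₁, hσ₁B, hσ₁w⟩ := Finset.mem_image.mp hw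
    have hfull : B.filter (fun σ => word pop σ = w) = univ.filter (fun σ => word pop σ = w) := by
      ext σ
      simp only [hB, Finset.mem_filter, Finset.filter_filter, mem_univ, true_and]
      constructor
      · rintro ⟨_, h2⟩; exact h2
      · intro h2
        exact ⟨h2 ▸ hDbad w hw, h2⟩
    rw [hfull, ← hσ₁w]
    exact fiber_card pop σ₁ 1
  -- D.card ≤ N.choose (z-1)
  have hDcard : D.card ≤ N.choose (z - 1) := by
    have hch : (Finset.powersetCard (N - z + 1) (univ : Finset (Fin N))).card
        = N.choose (z - 1) := by
      rw [Finset.card_powersetCard, Finset.card_univ, Fintype.card_fin]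
      rw [show N - z + 1 = N - (z - 1) by omega]
      exact Nat.choose_symm (by omega)
    rw [← hch]
    apply Finset.card_le_card_of_injOn
        (fun w => univ.filter (fun j : Fin N => (if h : Bad w then rmap w h else w) j = true))
    · intro w hw
      rw [Finset.mem_coe]
      beta_reduce
      rw [dif_pos (hDbad w hw)]
      rw [Finset.mem_powersetCard]
      refine ⟨Finset.subset_univ _, ?_⟩
      have h1 := rmap_trues w (hDbad w hw)
      have h2 := hDz w hw
      rw [← cnt_N]
      omega
    · intro w₁ hw₁ w₂ hw₂ h
      simp only [dif_pos (hDbad w₁ hw₁), dif_pos (hDbad w₂ hw₂)] at h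
      apply rmap_inj (hDbad w₁ hw₁) (hDbad w₂ hw₂)
      funext j
      have hj : (j ∈ univ.filter (fun j : Fin N => rmap w₁ (hDbad w₁ hw₁) j = true))
          ↔ (j ∈ univ.filter (fun j : Fin N => rmap w₂ (hDbad w₂ hw₂) j = true)) := by rw [h]
      simp only [Finset.mem_filter, mem_univ, true_and] at hj
      cases h1 : rmap w₁ (hDbad w₁ hw₁) j <;> cases h2 : rmap w₂ (hDbad w₂ hw₂) j <;>
        simp [h1, h2] at hj ⊢
  -- N.choose z * F ≤ N.factorial
  have hchz : N.choose z * F ≤ N.factorial := by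
    have hNfact : (univ : Finset (Equiv.Perm (Fin N))).card = N.factorial := by
      rw [Finset.card_univ, Fintype.card_perm, Fintype.card_fin]
    have h1 : (univ : Finset (Equiv.Perm (Fin N))).card
        = ∑ w ∈ (univ : Finset (Fin N → Bool)), (univ.filter (fun σ => word pop σ = w)).card :=
      Finset.card_eq_sum_card_fiberwise (fun σ _ => mem_univ _)
    set Z := (univ.filter (fun w : Fin N → Bool => cnt w true N = z)) with hZ
    have h2 : ∑ w ∈ Z, (univ.filter (fun σ => word pop σ = w)).card
        ≤ ∑ w ∈ (univ : Finset (Fin N → Bool)), (univ.filter (fun σ => word pop σ = w)).card :=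
      Finset.sum_le_sum_of_subset (Finset.subset_univ _)
    have h3 : ∀ w ∈ Z, (univ.filter (fun σ => word pop σ = w)).card = F := by
      intro w hw
      rw [hZ, Finset.mem_filter] at hw
      obtain ⟨σ₀, hσ₀⟩ := fiber_nonempty pop w (by rw [← cnt_N, hw.2, hz])
      rw [← hσ₀]
      exact fiber_card pop σ₀ 1
    have h4 : ∑ w ∈ Z, (univ.filter (fun σ => word pop σ = w)).card = Z.card * F := by
      rw [Finset.sum_congr rfl h3, Finset.sum_const, smul_eq_mul]
    have h5 : Z.card = N.choose z := card_words z
    have h4' : ∑ w ∈ Z, (univ.filter (fun σ => word pop σ = w)).card = N.choose z * F := by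
      rw [h4, h5]
    have h6 : ∑ w ∈ (univ : Finset (Fin N → Bool)),
        (univ.filter (fun σ => word pop σ = w)).card = N.factorial := by
      rw [← h1, hNfact]
    omega
  -- combine
  have key : N.choose z * z = N.choose (z - 1) * (N - z + 1) := by
    have h1 := Nat.choose_succ_right_eq N (z - 1)
    rw [show z - 1 + 1 = z by omega] at h1
    rw [show N - (z - 1) = N - z + 1 by omega] at h1
    exact h1
  calc B.card * (N - z + 1) = D.card * F * (N - z + 1) := by rw [hBcard]
    _ ≤ N.choose (z - 1) * F * (N - z + 1) := by
        exact Nat.mul_le_mul_right _ (Nat.mul_le_mul_right _ hDcard)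
    _ = (N.choose (z - 1) * (N - z + 1)) * F := by ring
    _ = (N.choose z * z) * F := by rw [key]
    _ = z * (N.choose z * F) := by ring
    _ ≤ z * N.factorial := Nat.mul_le_mul_left _ hchz

end Stmt8

open Stmt8

theorem stmt_8 (n i N : ℕ) (hn : 0 < n) (hN : N ≤ n) (hi : 4 * i ≤ n)
    (pop : Fin N → Bool) (z : ℕ)
    (hz : z = (Finset.univ.filter (fun j => pop j = true)).card)
    (hzi : z ≤ i) (hfalse : n - i ≤ N - z) :
    ((Finset.univ.filter (fun σ : Equiv.Perm (Fin N) =>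
        ∃ t : ℕ, t ≤ N ∧
          (Finset.univ.filter (fun j : Fin N => (j : ℕ) < t ∧ pop (σ j) = false)).card + 1
            ≤ (Finset.univ.filter (fun j : Fin N => (j : ℕ) < t ∧ pop (σ j) = true)).card)).card : ℝ)
        / (Nat.factorial N)
      ≤ 2 * (i : ℝ) / n := by
  have hset : (Finset.univ.filter (fun σ : Equiv.Perm (Fin N) =>
        ∃ t : ℕ, t ≤ N ∧
          (Finset.univ.filter (fun j : Fin N => (j : ℕ) < t ∧ pop (σ j) = false)).card + 1
            ≤ (Finset.univ.filter (fun j : Fin N => (j : ℕ) < t ∧ pop (σ j) = true)).card))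
      = Finset.univ.filter (fun σ : Equiv.Perm (Fin N) => Bad (word pop σ)) := by
    apply Finset.filter_congr
    intro σ _
    simp only [Bad, cnt, word]
    convert Iff.rfl <;> exact Finset.filter_congr_decidable _ _ _
  rw [hset]
  have hmain := main pop z hz
  set b := (Finset.univ.filter (fun σ : Equiv.Perm (Fin N) => Bad (word pop σ))).card with hb
  have hnat : b * n ≤ 2 * i * N.factorial := by
    have h1 : n ≤ 2 * (N - z + 1) := by omega
    calc b * n ≤ b * (2 * (N - z + 1)) := Nat.mul_le_mul_left _ h1
      _ = 2 * (b * (N - z + 1)) := by ring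
      _ ≤ 2 * (z * N.factorial) := Nat.mul_le_mul_left _ hmain
      _ ≤ 2 * (i * N.factorial) := by
          exact Nat.mul_le_mul_left _ (Nat.mul_le_mul_right _ hzi)
      _ = 2 * i * N.factorial := by ring
  rw [div_le_div_iff₀ (by exact_mod_cast Nat.factorial_pos N) (by exact_mod_cast hn)]
  calc (b : ℝ) * n = ((b * n : ℕ) : ℝ) := by push_cast; ring
    _ ≤ ((2 * i * N.factorial : ℕ) : ℝ) := by exact_mod_cast hnat
    _ = 2 * i * N.factorial := by push_cast; ring
end

section
/- For every constant c₁ > 0 and all sufficiently large n, letting r = r_min with r ≥ C·n for a constant C > 0 and letting k₀ ≤ 6√n, the product ∏_{i=k₀}^{r} (1 − 1/((c₁ log n)·i)) is at most exp(−⌊log₂(r/(6√n))⌋/(2 c₁ log n)), which is bounded above by a constant strictly less than 1 (i.e., e^{−Ω(1)}). -/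
open Finset Real

lemma harmonic_ge_log (a : ℕ) (ha : 1 ≤ a) : ∀ b : ℕ, a ≤ b →
    Real.log b - Real.log a ≤ ∑ i ∈ Finset.Ico a b, (1 : ℝ) / i := by
  intro b hb
  induction b, hb using Nat.le_induction with
  | base => simp
  | succ b hab ih =>
    have hb1 : (1 : ℝ) ≤ b := by exact_mod_cast le_trans ha hab
    have hbpos : (0 : ℝ) < b := by linarith
    rw [Finset.sum_Ico_succ_top hab]
    have hlog : Real.log (b + 1) - Real.log b ≤ 1 / b := by
      have h1 : Real.log ((b + 1) / b) ≤ (b + 1) / b - 1 :=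
        Real.log_le_sub_one_of_pos (by positivity)
      rw [Real.log_div (by positivity) (by positivity)] at h1
      have : ((b : ℝ) + 1) / b - 1 = 1 / b := by field_simp; ring
      linarith [this ▸ h1]
    push_cast
    linarith

set_option maxHeartbeats 1000000 in
theorem stmt_10 (c₁ C : ℝ) (hc₁ : 0 < c₁) (hC : 0 < C) :
    ∃ κ : ℝ, 0 < κ ∧ κ < 1 ∧ ∃ N : ℕ, ∀ n : ℕ, N ≤ n →
      ∀ r k₀ : ℕ, 1 ≤ k₀ → (k₀ : ℝ) ≤ 6 * Real.sqrt n → C * n ≤ r →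
        (∏ i ∈ Finset.Icc k₀ r, (1 - 1 / ((c₁ * Real.logb 2 n) * i)))
            ≤ Real.exp (-(⌊Real.logb 2 ((r : ℝ) / (6 * Real.sqrt n))⌋ : ℝ)
                / (2 * c₁ * Real.logb 2 n)) ∧
        Real.exp (-(⌊Real.logb 2 ((r : ℝ) / (6 * Real.sqrt n))⌋ : ℝ)
                / (2 * c₁ * Real.logb 2 n)) ≤ κ := by
  refine ⟨Real.exp (-(1 / (8 * c₁))), Real.exp_pos _, ?_, ?_⟩
  · rw [Real.exp_lt_one_iff]
    have : 0 < 1 / (8 * c₁) := by positivity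
    linarith
  · -- choose N
    have htend : Filter.Tendsto (fun n : ℕ => Real.logb 2 n) Filter.atTop Filter.atTop := by
      have := Real.tendsto_logb_atTop (b := 2) (by norm_num)
      exact this.comp tendsto_natCast_atTop_atTop
    have htend2 : Filter.Tendsto (fun n : ℕ => (n : ℝ)) Filter.atTop Filter.atTop :=
      tendsto_natCast_atTop_atTop
    have hev : ∀ᶠ n : ℕ in Filter.atTop,
        2 ≤ c₁ * Real.logb 2 n ∧ 4 * (Real.logb 2 (6 / C) + 1) ≤ Real.logb 2 n ∧
          6 / C ≤ Real.sqrt n := by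
      filter_upwards [htend.eventually_ge_atTop (2 / c₁),
        htend.eventually_ge_atTop (4 * (Real.logb 2 (6 / C) + 1)),
        htend2.eventually_ge_atTop ((6 / C) ^ 2)] with n h1 h2 h3
      refine ⟨?_, h2, ?_⟩
      · rw [div_le_iff₀ hc₁] at h1
        linarith
      · calc (6 / C : ℝ) = Real.sqrt ((6 / C) ^ 2) := (Real.sqrt_sq (by positivity)).symm
          _ ≤ Real.sqrt n := Real.sqrt_le_sqrt h3
    obtain ⟨N, hN⟩ := Filter.eventually_atTop.mp hev
    refine ⟨N, fun n hn r k₀ hk₀ hk₀n hr => ?_⟩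
    obtain ⟨hL2, hL4, hsq⟩ := hN n hn
    set L := Real.logb 2 n with hLdef
    have hLpos : 0 < L := by nlinarith
    have hsqpos : 0 < Real.sqrt n := lt_of_lt_of_le (by positivity) hsq
    have hnpos : (0 : ℝ) < n := Real.sqrt_pos.mp hsqpos
    have hsqsq : Real.sqrt n * Real.sqrt n = n := Real.mul_self_sqrt hnpos.le
    -- 6 * sqrt n ≤ C * n ≤ r
    have h6r : 6 * Real.sqrt n ≤ r := by
      have h6 : 6 ≤ C * Real.sqrt n := by
        rw [div_le_iff₀ hC] at hsq; linarith
      nlinarith [hsqsq, hsqpos]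
    have hk₀r : (k₀ : ℝ) ≤ r := le_trans hk₀n h6r
    have hk₀rn : k₀ ≤ r := by exact_mod_cast hk₀r
    have hrpos : (0 : ℝ) < r := by
      have : (0:ℝ) < k₀ := by exact_mod_cast hk₀
      linarith
    have hk₀pos : (0 : ℝ) < k₀ := by exact_mod_cast hk₀
    set x := (r : ℝ) / (6 * Real.sqrt n) with hxdef
    have hx1 : 1 ≤ x := (one_le_div (by positivity)).2 h6r
    set F := (⌊Real.logb 2 x⌋ : ℝ) with hFdef
    have hlogbx : Real.logb 2 x = Real.log x / Real.log 2 := rfl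
    have hlog2 : (0.6931471803 : ℝ) < Real.log 2 := Real.log_two_gt_d9
    have hlog2' : Real.log 2 ≤ 1 := by
      have := Real.log_le_sub_one_of_pos (by norm_num : (0:ℝ) < 2); linarith
    have hlogxnn : 0 ≤ Real.log x := Real.log_nonneg hx1
    have hF0 : 0 ≤ F := by
      have h : (0:ℤ) ≤ ⌊Real.logb 2 x⌋ := by
        apply Int.floor_nonneg.2
        exact Real.logb_nonneg (by norm_num) hx1
      rw [hFdef]
      exact_mod_cast h
    have hFle : F ≤ 2 * Real.log x := by
      have h1 : F ≤ Real.logb 2 x := Int.floor_le _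
      have h2 : Real.logb 2 x ≤ 2 * Real.log x := by
        rw [hlogbx, div_le_iff₀ (by linarith)]
        nlinarith
      linarith
    -- harmonic bound
    have hharm : F / 2 ≤ ∑ i ∈ Finset.Icc k₀ r, (1 : ℝ) / i := by
      have h1 : Real.log r - Real.log k₀ ≤ ∑ i ∈ Finset.Ico k₀ r, (1 : ℝ) / i :=
        harmonic_ge_log k₀ hk₀ r hk₀rn
      have h2 : Real.log x ≤ Real.log r - Real.log k₀ := by
        rw [hxdef, Real.log_div (by positivity) (by positivity)]
        have := Real.log_le_log hk₀pos hk₀n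
        linarith
      have h3 : (∑ i ∈ Finset.Ico k₀ r, (1 : ℝ) / i) ≤ ∑ i ∈ Finset.Icc k₀ r, (1 : ℝ) / i := by
        apply Finset.sum_le_sum_of_subset_of_nonneg
        · exact Finset.Ico_subset_Icc_self
        · intro i _ _; positivity
      linarith
    constructor
    · -- main product bound
      have hcLpos : 0 < c₁ * L := by linarith
      calc (∏ i ∈ Finset.Icc k₀ r, (1 - 1 / ((c₁ * L) * i)))
          ≤ ∏ i ∈ Finset.Icc k₀ r, Real.exp (-(1 / ((c₁ * L) * i))) := by
            apply Finset.prod_le_prod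
            · intro i hi
              have hi1 : (1:ℝ) ≤ i := by
                have := (Finset.mem_Icc.1 hi).1
                exact_mod_cast le_trans hk₀ this
              have : 1 / ((c₁ * L) * i) ≤ 1 / 2 := by
                apply div_le_div_of_nonneg_left (by norm_num) (by norm_num)
                nlinarith
              linarith
            · intro i _
              have := Real.add_one_le_exp (-(1 / ((c₁ * L) * i)))
              linarith
        _ = Real.exp (∑ i ∈ Finset.Icc k₀ r, -(1 / ((c₁ * L) * i))) :=
            (Real.exp_sum _ _).symm
        _ ≤ Real.exp (-F / (2 * c₁ * L)) := by
            apply Real.exp_le_exp.2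
            have hsum : ∑ i ∈ Finset.Icc k₀ r, -(1 / ((c₁ * L) * i))
                = -((∑ i ∈ Finset.Icc k₀ r, (1:ℝ) / i) / (c₁ * L)) := by
              rw [show -((∑ i ∈ Finset.Icc k₀ r, (1:ℝ) / i) / (c₁ * L))
                  = ∑ i ∈ Finset.Icc k₀ r, ((1:ℝ) / i) * (-(1 / (c₁ * L))) by
                rw [← Finset.sum_mul]; ring]
              apply Finset.sum_congr rfl
              intro i hi
              have hipos : (0:ℝ) < i := by
                have := (Finset.mem_Icc.1 hi).1
                exact_mod_cast lt_of_lt_of_le hk₀ this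
              field_simp
            rw [hsum, neg_div, neg_le_neg_iff]
            rw [div_le_div_iff₀ (by positivity) (by positivity)]
            calc F * (c₁ * L) = (F / 2) * (2 * c₁ * L) / 2 * 2 := by ring
              _ ≤ (∑ i ∈ Finset.Icc k₀ r, (1:ℝ) / i) * (2 * c₁ * L) / 2 * 2 := by
                  have h2cL : 0 < 2 * c₁ * L := by positivity
                  gcongr
              _ = (∑ i ∈ Finset.Icc k₀ r, (1:ℝ) / i) * (2 * c₁ * L) := by ring
    · -- constant bound
      apply Real.exp_le_exp.2
      rw [neg_div, neg_le_neg_iff, div_le_div_iff₀ (by positivity) (by positivity)]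
      -- need 1 * (2 * c₁ * L) ≤ F * (8 * c₁), i.e. L / 4 ≤ F
      have hFge : L / 4 ≤ F := by
        have h1 : Real.logb 2 x - 1 < F := by
          have := Int.lt_floor_add_one (Real.logb 2 x)
          rw [hFdef]; push_cast; linarith
        have h2 : Real.logb 2 (C * Real.sqrt n / 6) ≤ Real.logb 2 x := by
          apply Real.logb_le_logb_of_le (by norm_num : (1:ℝ) < 2) (by positivity)
          rw [hxdef, div_le_div_iff₀ (by norm_num) (by positivity)]
          have e : C * Real.sqrt n * (6 * Real.sqrt n) = 6 * (C * (Real.sqrt n * Real.sqrt n)) := by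
            ring
          rw [e, hsqsq]
          linarith
        have h3 : Real.logb 2 (C * Real.sqrt n / 6) = L / 2 - Real.logb 2 (6 / C) := by
          rw [hLdef]
          have : (C * Real.sqrt n / 6 : ℝ) = Real.sqrt n / (6 / C) := by
            field_simp
          rw [this, Real.logb_div (by positivity) (by positivity)]
          congr 1
          rw [Real.logb, Real.logb, Real.log_sqrt hnpos.le]
          ring
        rw [h3] at h2
        linarith
      nlinarith
end
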